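/- Let S be a full binary tree (a finite set of Boolean lists containing the empty list, closed under prefixes, and with w++[false] ∈ S ⇔ w++[true] ∈ S for all w). Let a, b ∈ N̄₂(S) with pair(a) <_Q pair(b). Then there exists c ∈ S with pair(a) <_Q StBr(c) <_Q pair(b). -/
import Mathlib


/-- One step of the Stern–Brocot state-passing recursion: the state is the pair
`(L, R)` of bounds; a `false` step (left child) replaces `R` by `L + R`, a `true`
step (right child) replaces `L` by `L + R`. -/
def sbStep : ((ℕ × ℕ) × (ℕ × ℕ)) → Bool → ((ℕ × ℕ) × (ℕ × ℕ))
  | (L, R), false => (L, (L.1 + R.1, L.2 + R.2))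
  | (L, R), true  => ((L.1 + R.1, L.2 + R.2), R)

/-- The bounds `(L(w), R(w))` of the node of the Stern–Brocot tree addressed by
the path `w`, starting from `((0,1), (1,0))` at the root. -/
def sbBounds (w : List Bool) : (ℕ × ℕ) × (ℕ × ℕ) :=
  w.foldl sbStep ((0, 1), (1, 0))

/-- The left godfather pair `L(w)`. -/
def sbL (w : List Bool) : ℕ × ℕ := (sbBounds w).1

/-- The right godfather pair `R(w)`. -/
def sbR (w : List Bool) : ℕ × ℕ := (sbBounds w).2

/-- The Stern–Brocot pair `StBr(w) = L(w) + R(w)` (componentwise sum). -/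
def stBr (w : List Bool) : ℕ × ℕ :=
  ((sbL w).1 + (sbR w).1, (sbL w).2 + (sbR w).2)

/-- The order `<_Q` on pairs of nonnegative integers:
`(r,s) <_Q (r',s')` iff `r·s' < r'·s`. -/
def ltQ (p q : ℕ × ℕ) : Prop := p.1 * q.2 < q.1 * p.2

/-- The order `≤_Q` on pairs of nonnegative integers:
`(r,s) ≤_Q (r',s')` iff `r·s' ≤ r'·s`. -/
def leQ (p q : ℕ × ℕ) : Prop := p.1 * q.2 ≤ q.1 * p.2

/-- The weight `|(r,s)| := r + s` of a pair. -/
def wtQ (p : ℕ × ℕ) : ℕ := p.1 + p.2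

/-- `p` is the pair of an element of `N̄₂(S)`: either one of the two ghosts
`∂ℓ` (pair `(0,1)`) or `∂r` (pair `(1,0)`), or an internal node of `S`
(a node `w ∈ S` with `w ++ [false] ∈ S`). -/
def IsN2barPair (S : Finset (List Bool)) (p : ℕ × ℕ) : Prop :=
  p = (0, 1) ∨ p = (1, 0) ∨ ∃ w ∈ S, w ++ [false] ∈ S ∧ stBr w = p

lemma sbBounds_append (w u : List Bool) : sbBounds (w ++ u) = u.foldl sbStep (sbBounds w) := by
  simp [sbBounds, List.foldl_append]

lemma sbStep_false (st : (ℕ × ℕ) × (ℕ × ℕ)) :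
    sbStep st false = (st.1, (st.1.1 + st.2.1, st.1.2 + st.2.2)) := rfl
lemma sbStep_true (st : (ℕ × ℕ) × (ℕ × ℕ)) :
    sbStep st true = ((st.1.1 + st.2.1, st.1.2 + st.2.2), st.2) := rfl

lemma sbL_snoc_false (w : List Bool) : sbL (w ++ [false]) = sbL w := by
  simp [sbL, sbBounds_append, sbStep_false]
lemma sbR_snoc_false (w : List Bool) : sbR (w ++ [false]) = stBr w := by
  simp [sbR, sbBounds_append, sbStep_false, stBr, sbL]
lemma sbL_snoc_true (w : List Bool) : sbL (w ++ [true]) = stBr w := by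
  simp [sbL, sbBounds_append, sbStep_true, stBr, sbR]
lemma sbR_snoc_true (w : List Bool) : sbR (w ++ [true]) = sbR w := by
  simp [sbR, sbBounds_append, sbStep_true]

def sbInv (st : (ℕ × ℕ) × (ℕ × ℕ)) : Prop :=
  1 ≤ st.1.2 ∧ 1 ≤ st.2.1 ∧ st.2.1 * st.1.2 = st.1.1 * st.2.2 + 1

lemma sbInv_step (st : (ℕ × ℕ) × (ℕ × ℕ)) (b : Bool) (h : sbInv st) : sbInv (sbStep st b) := by
  obtain ⟨h1, h2, h3⟩ := h
  cases b <;> simp [sbStep_false, sbStep_true, sbInv] <;>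
    refine ⟨by omega, by omega, ?_⟩ <;> ring_nf <;> ring_nf at h3 <;> linarith

lemma sbInv_bounds (w : List Bool) : sbInv (sbBounds w) := by
  induction w using List.reverseRecOn with
  | nil => exact ⟨le_refl 1, le_refl 1, rfl⟩
  | append_singleton w b ih =>
    have : sbBounds (w ++ [b]) = sbStep (sbBounds w) b := by
      simp [sbBounds_append]
    rw [this]; exact sbInv_step _ _ ih

lemma sbL2_pos (w : List Bool) : 1 ≤ (sbL w).2 := (sbInv_bounds w).1
lemma sbR1_pos (w : List Bool) : 1 ≤ (sbR w).1 := (sbInv_bounds w).2.1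
lemma sb_det (w : List Bool) : (sbR w).1 * (sbL w).2 = (sbL w).1 * (sbR w).2 + 1 :=
  (sbInv_bounds w).2.2

lemma stBr1_pos (w : List Bool) : 1 ≤ (stBr w).1 := by
  have := sbR1_pos w; simp [stBr]; omega
lemma stBr2_pos (w : List Bool) : 1 ≤ (stBr w).2 := by
  have := sbL2_pos w; simp [stBr]; omega

lemma ltQ_sbL_stBr (w : List Bool) : ltQ (sbL w) (stBr w) := by
  have h := sb_det w
  simp only [ltQ, stBr]
  nlinarith

lemma ltQ_stBr_sbR (w : List Bool) : ltQ (stBr w) (sbR w) := by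
  have h := sb_det w
  simp only [ltQ, stBr]
  nlinarith

lemma leQ_of_ltQ {p q : ℕ × ℕ} (h : ltQ p q) : leQ p q := le_of_lt h

lemma ltQ_of_leQ_of_ltQ {p q r : ℕ × ℕ} (h1 : leQ p q) (h2 : ltQ q r)
    (hp : 0 < p.1 + p.2) : ltQ p r := by
  simp only [ltQ, leQ] at *
  rcases Nat.eq_zero_or_pos q.2 with h | h
  · rw [h] at h1 h2
    simp only [Nat.mul_zero] at h1 h2
    omega
  · rcases Nat.eq_zero_or_pos p.2 with hp2 | hp2
    · -- p.2 = 0, so p.1 > 0, so q.2 = 0 from h1: contradiction with h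
      rw [hp2] at h1
      simp only [Nat.mul_zero, Nat.le_zero, Nat.mul_eq_zero] at h1
      omega
    · have A : p.1 * q.2 * r.2 ≤ q.1 * p.2 * r.2 := mul_le_mul_left h1 r.2
      have B : q.1 * r.2 * p.2 < r.1 * q.2 * p.2 := by
        exact Nat.mul_lt_mul_of_lt_of_le h2 (le_refl p.2) hp2
      have C : q.2 * (p.1 * r.2) < q.2 * (r.1 * p.2) := by nlinarith
      exact Nat.lt_of_mul_lt_mul_left C

lemma ltQ_of_ltQ_of_leQ {p q r : ℕ × ℕ} (h1 : ltQ p q) (h2 : leQ q r)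
    (hr : 0 < r.1 + r.2) : ltQ p r := by
  simp only [ltQ, leQ] at *
  rcases Nat.eq_zero_or_pos q.2 with h | h
  · rw [h] at h1 h2
    simp only [Nat.mul_zero] at h1 h2
    have hq1 : 0 < q.1 := by
      rcases Nat.eq_zero_or_pos q.1 with h' | h'
      · rw [h'] at h1; simp at h1
      · exact h'
    have hp2 : 0 < p.2 := by
      rcases Nat.eq_zero_or_pos p.2 with h' | h'
      · rw [h'] at h1; simp at h1
      · exact h'
    have hr2 : r.2 = 0 := by
      rcases Nat.eq_zero_or_pos r.2 with h' | h'
      · exact h'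
      · exfalso; have : 0 < q.1 * r.2 := Nat.mul_pos hq1 h'; omega
    rw [hr2]
    simp only [Nat.mul_zero]
    exact Nat.mul_pos (by omega) hp2
  · rcases Nat.eq_zero_or_pos r.2 with hr2 | hr2
    · have hp2 : 0 < p.2 := by
        rcases Nat.eq_zero_or_pos p.2 with h' | h'
        · rw [h'] at h1; simp at h1
        · exact h'
      rw [hr2]
      simp only [Nat.mul_zero]
      have hr1 : 0 < r.1 := by omega
      exact Nat.mul_pos hr1 hp2
    · have A : p.1 * q.2 * r.2 < q.1 * p.2 * r.2 := by
        exact Nat.mul_lt_mul_of_lt_of_le h1 (le_refl r.2) hr2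
      have B : q.1 * r.2 * p.2 ≤ r.1 * q.2 * p.2 := mul_le_mul_left h2 p.2
      have C : q.2 * (p.1 * r.2) < q.2 * (r.1 * p.2) := by nlinarith
      exact Nat.lt_of_mul_lt_mul_left C

lemma ltQ_asymm {p q : ℕ × ℕ} (h1 : ltQ p q) (h2 : leQ q p) : False := by
  simp only [ltQ, leQ] at *; omega

/-- The Stern–Brocot pair of any node in the subtree of `w` is strictly between
the bounds of `w`. -/
lemma stBr_between (u w : List Bool) :
    ltQ (sbL w) (stBr (w ++ u)) ∧ ltQ (stBr (w ++ u)) (sbR w) := by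
  induction u generalizing w with
  | nil => simpa using ⟨ltQ_sbL_stBr w, ltQ_stBr_sbR w⟩
  | cons b u ih =>
    have hrw : w ++ b :: u = (w ++ [b]) ++ u := by simp
    rw [hrw]
    obtain ⟨h1, h2⟩ := ih (w ++ [b])
    cases b
    · rw [sbL_snoc_false] at h1
      rw [sbR_snoc_false] at h2
      exact ⟨h1, ltQ_of_ltQ_of_leQ h2 (leQ_of_ltQ (ltQ_stBr_sbR w))
        (by have := sbR1_pos w; omega)⟩
    · rw [sbL_snoc_true] at h1
      rw [sbR_snoc_true] at h2
      exact ⟨ltQ_of_leQ_of_ltQ (leQ_of_ltQ (ltQ_sbL_stBr w)) h1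
        (by have := sbL2_pos w; omega), h2⟩

lemma leQ_refl (p : ℕ × ℕ) : leQ p p := le_refl _

lemma ltQ_asymm' {p q : ℕ × ℕ} (h1 : ltQ p q) (h2 : ltQ q p) : False :=
  ltQ_asymm h1 (leQ_of_ltQ h2)

/-- The binary-search step lemma: starting at a node `w ∈ S` such that the left
datum `p` is the left ghost, a verified lower bound, or the Stern–Brocot pair of
an internal node of `S` below `w` (and symmetrically for `q`), we can find
`c ∈ S` with `p <_Q stBr c <_Q q`. -/
lemma searchAux (S : Finset (List Bool))
    (hprefix : ∀ w ∈ S, ∀ v : List Bool, v <+: w → v ∈ S)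
    (hfull : ∀ w : List Bool, w ++ [false] ∈ S ↔ w ++ [true] ∈ S)
    (p q : ℕ × ℕ) (hpq : ltQ p q) (hvp : 0 < p.1 + p.2) (hvq : 0 < q.1 + q.2) :
    ∀ n (w : List Bool), w ∈ S →
      (p = (0,1) ∨ leQ p (sbL w) ∨
        ∃ u, (w ++ u) ∈ S ∧ (w ++ u) ++ [false] ∈ S ∧ stBr (w ++ u) = p ∧ u.length < n) →
      (q = (1,0) ∨ leQ (sbR w) q ∨
        ∃ u, (w ++ u) ∈ S ∧ (w ++ u) ++ [false] ∈ S ∧ stBr (w ++ u) = q ∧ u.length < n) →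
      ∃ c ∈ S, ltQ p (stBr c) ∧ ltQ (stBr c) q := by
  intro n
  induction n with
  | zero =>
    intro w hw hP hQ
    have hP' : p = (0,1) ∨ leQ p (sbL w) := by
      rcases hP with h | h | ⟨u, _, _, _, h⟩
      · exact Or.inl h
      · exact Or.inr h
      · omega
    have hQ' : q = (1,0) ∨ leQ (sbR w) q := by
      rcases hQ with h | h | ⟨u, _, _, _, h⟩
      · exact Or.inl h
      · exact Or.inr h
      · omega
    refine ⟨w, hw, ?_, ?_⟩
    · rcases hP' with rfl | h
      · have := stBr1_pos w; simp [ltQ]; omega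
      · exact ltQ_of_leQ_of_ltQ h (ltQ_sbL_stBr w) hvp
    · rcases hQ' with rfl | h
      · have := stBr2_pos w; simp [ltQ]; omega
      · exact ltQ_of_ltQ_of_leQ (ltQ_stBr_sbR w) h hvq
  | succ n ih =>
    intro w hw hP hQ
    by_cases hRight : leQ (stBr w) p
    · -- go to the right child
      -- transform the Q-datum to the right child
      have hQnew : q = (1,0) ∨ leQ (sbR (w ++ [true])) q ∨
          ∃ v, ((w ++ [true]) ++ v) ∈ S ∧ ((w ++ [true]) ++ v) ++ [false] ∈ S ∧
            stBr ((w ++ [true]) ++ v) = q ∧ v.length < n := by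
        rcases hQ with h | h | ⟨v, hvS, hvS', hvst, hvlen⟩
        · exact Or.inl h
        · refine Or.inr (Or.inl ?_); rwa [sbR_snoc_true]
        · cases v with
          | nil =>
            exfalso
            simp only [List.append_nil] at hvst
            rw [hvst] at hRight
            exact ltQ_asymm hpq hRight
          | cons b v' =>
            cases b
            · exfalso
              have h2 := (stBr_between v' (w ++ [false])).2
              rw [sbR_snoc_false] at h2
              rw [show w ++ false :: v' = (w ++ [false]) ++ v' by simp] at hvst
              rw [hvst] at h2
              exact ltQ_asymm' hpq (ltQ_of_ltQ_of_leQ h2 hRight hvp)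
            · refine Or.inr (Or.inr ⟨v', ?_, ?_, ?_, ?_⟩)
              · simpa using hvS
              · simpa using hvS'
              · rw [show (w ++ [true]) ++ v' = w ++ true :: v' by simp]; exact hvst
              · simp only [List.length_cons] at hvlen; omega
      rcases hP with rfl | hP | ⟨u, huS, huS', hust, hulen⟩
      · exfalso; have := stBr1_pos w; simp [leQ] at hRight; omega
      · exact absurd hRight
          (fun h => ltQ_asymm (ltQ_of_leQ_of_ltQ hP (ltQ_sbL_stBr w) hvp) h)
      · cases u with
        | nil =>
          simp only [List.append_nil] at huS huS' hust
          have hmem : w ++ [true] ∈ S := (hfull w).mp huS'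
          apply ih (w ++ [true]) hmem _ hQnew
          refine Or.inr (Or.inl ?_)
          rw [sbL_snoc_true, hust]
          exact leQ_refl p
        | cons b u' =>
          cases b
          · exfalso
            have h2 := (stBr_between u' (w ++ [false])).2
            rw [sbR_snoc_false] at h2
            rw [show w ++ false :: u' = (w ++ [false]) ++ u' by simp] at hust
            rw [hust] at h2
            exact ltQ_asymm h2 hRight
          · have hmem : w ++ [true] ∈ S := hprefix _ huS (w ++ [true]) ⟨u', by simp⟩
            apply ih (w ++ [true]) hmem _ hQnew
            refine Or.inr (Or.inr ⟨u', ?_, ?_, ?_, ?_⟩)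
            · simpa using huS
            · simpa using huS'
            · rw [show (w ++ [true]) ++ u' = w ++ true :: u' by simp]; exact hust
            · simp only [List.length_cons] at hulen; omega
    · by_cases hLeft : leQ q (stBr w)
      · -- go to the left child
        have hstop1 : ltQ p (stBr w) := by
          simp only [ltQ, leQ, Nat.not_le] at hRight ⊢; exact hRight
        have hPnew : p = (0,1) ∨ leQ p (sbL (w ++ [false])) ∨
            ∃ v, ((w ++ [false]) ++ v) ∈ S ∧ ((w ++ [false]) ++ v) ++ [false] ∈ S ∧
              stBr ((w ++ [false]) ++ v) = p ∧ v.length < n := by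
          rcases hP with h | h | ⟨v, hvS, hvS', hvst, hvlen⟩
          · exact Or.inl h
          · refine Or.inr (Or.inl ?_); rwa [sbL_snoc_false]
          · cases v with
            | nil =>
              exfalso
              simp only [List.append_nil] at hvst
              rw [hvst] at hLeft
              exact ltQ_asymm hpq hLeft
            | cons b v' =>
              cases b
              · refine Or.inr (Or.inr ⟨v', ?_, ?_, ?_, ?_⟩)
                · simpa using hvS
                · simpa using hvS'
                · rw [show (w ++ [false]) ++ v' = w ++ false :: v' by simp]; exact hvst
                · simp only [List.length_cons] at hvlen; omega
              · exfalso
                have h2 := (stBr_between v' (w ++ [true])).1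
                rw [sbL_snoc_true] at h2
                rw [show w ++ true :: v' = (w ++ [true]) ++ v' by simp] at hvst
                rw [hvst] at h2
                exact ltQ_asymm' hstop1 h2
        rcases hQ with rfl | hQ | ⟨u, huS, huS', hust, hulen⟩
        · exfalso; have := stBr2_pos w; simp [leQ] at hLeft; omega
        · exact absurd hLeft
            (fun h => ltQ_asymm (ltQ_of_ltQ_of_leQ (ltQ_stBr_sbR w) hQ hvq) h)
        · cases u with
          | nil =>
            simp only [List.append_nil] at huS huS' hust
            apply ih (w ++ [false]) huS' hPnew
            refine Or.inr (Or.inl ?_)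
            rw [sbR_snoc_false, hust]
            exact leQ_refl q
          | cons b u' =>
            cases b
            · have hmem : w ++ [false] ∈ S := hprefix _ huS (w ++ [false]) ⟨u', by simp⟩
              apply ih (w ++ [false]) hmem hPnew
              refine Or.inr (Or.inr ⟨u', ?_, ?_, ?_, ?_⟩)
              · simpa using huS
              · simpa using huS'
              · rw [show (w ++ [false]) ++ u' = w ++ false :: u' by simp]; exact hust
              · simp only [List.length_cons] at hulen; omega
            · exfalso
              have h2 := (stBr_between u' (w ++ [true])).1
              rw [sbL_snoc_true] at h2
              rw [show w ++ true :: u' = (w ++ [true]) ++ u' by simp] at hust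
              rw [hust] at h2
              exact ltQ_asymm h2 hLeft
      · -- stop here
        refine ⟨w, hw, ?_, ?_⟩
        · simp only [ltQ, leQ, Nat.not_le] at hRight ⊢; exact hRight
        · simp only [ltQ, leQ, Nat.not_le] at hLeft ⊢; exact hLeft


/-- Let `S` be a full binary tree: a finite set of paths containing the empty
path, closed under prefixes, and with `w ++ [false] ∈ S ↔ w ++ [true] ∈ S`.
If `a, b ∈ N̄₂(S)` satisfy `pair(a) <_Q pair(b)`, then there is a node `c ∈ S`
with `pair(a) <_Q StBr(c) <_Q pair(b)`. -/
theorem sternBrocot_dense_between (S : Finset (List Bool))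
    (hroot : [] ∈ S)
    (hprefix : ∀ w ∈ S, ∀ v : List Bool, v <+: w → v ∈ S)
    (hfull : ∀ w : List Bool, w ++ [false] ∈ S ↔ w ++ [true] ∈ S)
    (p q : ℕ × ℕ) (hp : IsN2barPair S p) (hq : IsN2barPair S q)
    (hpq : ltQ p q) :
    ∃ c ∈ S, ltQ p (stBr c) ∧ ltQ (stBr c) q := by
  have hvp : 0 < p.1 + p.2 := by
    rcases hp with rfl | rfl | ⟨a, _, _, rfl⟩
    · simp
    · simp
    · have := stBr1_pos a; omega
  have hvq : 0 < q.1 + q.2 := by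
    rcases hq with rfl | rfl | ⟨b, _, _, rfl⟩
    · simp
    · simp
    · have := stBr1_pos b; omega
  rcases hp with rfl | rfl | ⟨a, haS, haF, hast⟩
  · -- p = (0,1)
    rcases hq with rfl | rfl | ⟨b, hbS, hbF, hbst⟩
    · exfalso; simp [ltQ] at hpq
    · exact searchAux S hprefix hfull _ _ hpq hvp hvq 1 [] hroot
        (Or.inl rfl) (Or.inl rfl)
    · exact searchAux S hprefix hfull _ _ hpq hvp hvq (b.length + 1) [] hroot
        (Or.inl rfl)
        (Or.inr (Or.inr ⟨b, by simpa using hbS, by simpa using hbF,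
          by simpa using hbst, by omega⟩))
  · exfalso; simp [ltQ] at hpq
  · rcases hq with rfl | rfl | ⟨b, hbS, hbF, hbst⟩
    · exfalso; simp [ltQ] at hpq
    · exact searchAux S hprefix hfull _ _ hpq hvp hvq (a.length + 1) [] hroot
        (Or.inr (Or.inr ⟨a, by simpa using haS, by simpa using haF,
          by simpa using hast, by omega⟩))
        (Or.inl rfl)
    · exact searchAux S hprefix hfull _ _ hpq hvp hvq (a.length + b.length + 1) [] hroot
        (Or.inr (Or.inr ⟨a, by simpa using haS, by simpa using haF,
          by simpa using hast, by omega⟩))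
        (Or.inr (Or.inr ⟨b, by simpa using hbS, by simpa using hbF,
          by simpa using hbst, by omega⟩))
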